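/- arXiv:1610.03157 — 5 statements merged into one kernel-verified Lean document; each statement's English description precedes it below -/
import Mathlib

section
/- For integers q, r with 0 ≤ q ≤ h−1 and 1 ≤ r ≤ n, the point (1,−q,1−nq−r) equals (rh/((n+1)h))·v1 + ((n+1−r)/(n+1))·v2 + (((n+1)q+r)/((n+1)h))·v3 + (((n+1)(h−q)−r)/((n+1)h))·v, where v=(1,0,0); all four coefficients lie in [0,1) and their sum equals 2. -/
/-! Both pairs of coefficients have a common denominator: the first two sum to
`(r + (n + 1 - r)) / (n + 1) = 1` and the last two to `(n + 1) h / ((n + 1) h) = 1`.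
Each numerator lies in `[0, d)` for its denominator `d` because `1 ≤ r ≤ n < n + 1` and
`0 ≤ q ≤ h - 1`, so that `(n + 1)(h - q) ≥ n + 1 > r`. -/

open Set

lemma div_mem_Ico_zero_one {K : Type*} [Field K] [LinearOrder K] [IsStrictOrderedRing K]
    {a b : K} (hb : 0 < b) (ha : 0 ≤ a) (hab : a < b) : a / b ∈ Ico (0 : K) 1 :=
  ⟨div_nonneg ha hb.le, (div_lt_one hb).2 hab⟩

namespace LatticePointDecomposition

variable {h n q r : ℝ}

lemma decomposition (hh : h ≠ 0) (hn : n + 1 ≠ 0) :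
    (![1, -q, 1 - n * q - r] : Fin 3 → ℝ)
        = (r * h / ((n + 1) * h)) • (![0, 1, 0] : Fin 3 → ℝ)
          + ((n + 1 - r) / (n + 1)) • (![0, 0, 1] : Fin 3 → ℝ)
          + (((n + 1) * q + r) / ((n + 1) * h)) • (![1, -h, -(n * h)] : Fin 3 → ℝ)
          + (((n + 1) * (h - q) - r) / ((n + 1) * h)) • (![1, 0, 0] : Fin 3 → ℝ) := by
  simp only [Matrix.smul_cons, Matrix.smul_empty, smul_eq_mul, Matrix.add_cons,
    Matrix.head_cons, Matrix.tail_cons, Matrix.empty_add_empty, Matrix.vecCons_inj]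
  refine ⟨?_, ?_, ?_, trivial⟩ <;> field_simp <;> ring

lemma coeff_sum_eq_two (hh : h ≠ 0) (hn : n + 1 ≠ 0) :
    r * h / ((n + 1) * h) + (n + 1 - r) / (n + 1) + ((n + 1) * q + r) / ((n + 1) * h)
      + ((n + 1) * (h - q) - r) / ((n + 1) * h) = 2 := by
  field_simp
  ring

lemma coeff_v1_mem (hh : 0 < h) (hr0 : 0 ≤ r) (hrn : r < n + 1) :
    r * h / ((n + 1) * h) ∈ Ico (0 : ℝ) 1 :=
  div_mem_Ico_zero_one (by nlinarith) (by positivity) (by nlinarith)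

lemma coeff_v2_mem (hr0 : 0 < r) (hrn : r < n + 1) : (n + 1 - r) / (n + 1) ∈ Ico (0 : ℝ) 1 :=
  div_mem_Ico_zero_one (by linarith) (by linarith) (by linarith)

lemma coeff_v3_mem (hq0 : 0 ≤ q) (hqh : q + 1 ≤ h) (hr0 : 0 ≤ r) (hrn : r < n + 1) :
    ((n + 1) * q + r) / ((n + 1) * h) ∈ Ico (0 : ℝ) 1 :=
  div_mem_Ico_zero_one (by nlinarith) (by nlinarith) (by nlinarith)

lemma coeff_v_mem (hq0 : 0 ≤ q) (hqh : q + 1 ≤ h) (hr0 : 0 < r) (hrn : r < n + 1) :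
    ((n + 1) * (h - q) - r) / ((n + 1) * h) ∈ Ico (0 : ℝ) 1 :=
  div_mem_Ico_zero_one (by nlinarith) (by nlinarith) (by nlinarith)

end LatticePointDecomposition

open LatticePointDecomposition in
theorem stmt4_general (h n : ℕ) (hh : 0 < h) (q r : ℕ)
    (hq : q ≤ h - 1) (hr1 : 1 ≤ r) (hr2 : r ≤ n) :
    (![1, -(q : ℝ), 1 - (n : ℝ) * (q : ℝ) - (r : ℝ)] : Fin 3 → ℝ)
        = ((r : ℝ) * (h : ℝ) / (((n : ℝ) + 1) * (h : ℝ))) • (![0, 1, 0] : Fin 3 → ℝ)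
          + (((n : ℝ) + 1 - (r : ℝ)) / ((n : ℝ) + 1)) • (![0, 0, 1] : Fin 3 → ℝ)
          + ((((n : ℝ) + 1) * (q : ℝ) + (r : ℝ)) / (((n : ℝ) + 1) * (h : ℝ))) •
              (![1, -(h : ℝ), -((n : ℝ) * (h : ℝ))] : Fin 3 → ℝ)
          + ((((n : ℝ) + 1) * ((h : ℝ) - (q : ℝ)) - (r : ℝ)) / (((n : ℝ) + 1) * (h : ℝ))) •
              (![1, 0, 0] : Fin 3 → ℝ)
      ∧ ((r : ℝ) * (h : ℝ) / (((n : ℝ) + 1) * (h : ℝ)) ∈ Set.Ico (0 : ℝ) 1)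
      ∧ (((n : ℝ) + 1 - (r : ℝ)) / ((n : ℝ) + 1) ∈ Set.Ico (0 : ℝ) 1)
      ∧ ((((n : ℝ) + 1) * (q : ℝ) + (r : ℝ)) / (((n : ℝ) + 1) * (h : ℝ)) ∈ Set.Ico (0 : ℝ) 1)
      ∧ ((((n : ℝ) + 1) * ((h : ℝ) - (q : ℝ)) - (r : ℝ)) / (((n : ℝ) + 1) * (h : ℝ))
          ∈ Set.Ico (0 : ℝ) 1)
      ∧ (r : ℝ) * (h : ℝ) / (((n : ℝ) + 1) * (h : ℝ))
          + ((n : ℝ) + 1 - (r : ℝ)) / ((n : ℝ) + 1)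
          + (((n : ℝ) + 1) * (q : ℝ) + (r : ℝ)) / (((n : ℝ) + 1) * (h : ℝ))
          + (((n : ℝ) + 1) * ((h : ℝ) - (q : ℝ)) - (r : ℝ)) / (((n : ℝ) + 1) * (h : ℝ)) = 2 := by
  have hq0 : (0 : ℝ) ≤ q := q.cast_nonneg
  have hqh : (q : ℝ) + 1 ≤ h := by exact_mod_cast (by omega : q + 1 ≤ h)
  have hr0 : (0 : ℝ) < r := by exact_mod_cast hr1
  have hrn : (r : ℝ) < n + 1 := by exact_mod_cast Nat.lt_succ_of_le hr2
  have hh' : (h : ℝ) ≠ 0 := by positivity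
  have hn' : (n : ℝ) + 1 ≠ 0 := by positivity
  exact ⟨decomposition hh' hn', coeff_v1_mem (by linarith) hr0.le hrn, coeff_v2_mem hr0 hrn,
    coeff_v3_mem hq0 hqh hr0.le hrn, coeff_v_mem hq0 hqh hr0 hrn, coeff_sum_eq_two hh' hn'⟩

/-- For `0 ≤ q ≤ h-1` and `1 ≤ r ≤ n`, the point `(1,-q,1-n*q-r)` equals
`(r*h/((n+1)*h)) • v1 + ((n+1-r)/(n+1)) • v2 + (((n+1)*q+r)/((n+1)*h)) • v3
 + (((n+1)*(h-q)-r)/((n+1)*h)) • v` with `v = (1,0,0)`; all four coefficients lie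
in `[0,1)` and their sum equals `2`. -/
theorem stmt4 (h n : ℕ) (hh : 0 < h) (hn : 0 < n) (q r : ℕ)
    (hq : q ≤ h - 1) (hr1 : 1 ≤ r) (hr2 : r ≤ n) :
    (![1, -(q : ℝ), 1 - (n : ℝ) * (q : ℝ) - (r : ℝ)] : Fin 3 → ℝ)
        = ((r : ℝ) * (h : ℝ) / (((n : ℝ) + 1) * (h : ℝ))) • (![0, 1, 0] : Fin 3 → ℝ)
          + (((n : ℝ) + 1 - (r : ℝ)) / ((n : ℝ) + 1)) • (![0, 0, 1] : Fin 3 → ℝ)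
          + ((((n : ℝ) + 1) * (q : ℝ) + (r : ℝ)) / (((n : ℝ) + 1) * (h : ℝ))) •
              (![1, -(h : ℝ), -((n : ℝ) * (h : ℝ))] : Fin 3 → ℝ)
          + ((((n : ℝ) + 1) * ((h : ℝ) - (q : ℝ)) - (r : ℝ)) / (((n : ℝ) + 1) * (h : ℝ))) •
              (![1, 0, 0] : Fin 3 → ℝ)
      ∧ ((r : ℝ) * (h : ℝ) / (((n : ℝ) + 1) * (h : ℝ)) ∈ Set.Ico (0 : ℝ) 1)
      ∧ (((n : ℝ) + 1 - (r : ℝ)) / ((n : ℝ) + 1) ∈ Set.Ico (0 : ℝ) 1)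
      ∧ ((((n : ℝ) + 1) * (q : ℝ) + (r : ℝ)) / (((n : ℝ) + 1) * (h : ℝ)) ∈ Set.Ico (0 : ℝ) 1)
      ∧ ((((n : ℝ) + 1) * ((h : ℝ) - (q : ℝ)) - (r : ℝ)) / (((n : ℝ) + 1) * (h : ℝ))
          ∈ Set.Ico (0 : ℝ) 1)
      ∧ (r : ℝ) * (h : ℝ) / (((n : ℝ) + 1) * (h : ℝ))
          + ((n : ℝ) + 1 - (r : ℝ)) / ((n : ℝ) + 1)
          + (((n : ℝ) + 1) * (q : ℝ) + (r : ℝ)) / (((n : ℝ) + 1) * (h : ℝ))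
          + (((n : ℝ) + 1) * ((h : ℝ) - (q : ℝ)) - (r : ℝ)) / (((n : ℝ) + 1) * (h : ℝ)) = 2 :=
  stmt4_general h n hh q r hq hr1 hr2
end

section
/- Let Δ be the convex hull of v0=(1,1,n), v1=(0,1,0), v2=(0,0,1), v3=(1,−h,−nh) in ℝ³ for positive integers h and n. Then the point w=(1,1,1) cannot be written as α+β where α ∈ Δ ∩ ℤ³ and β ∈ 2Δ° ∩ ℤ³, where Δ° is the topological interior of Δ and 2Δ = {2x : x ∈ Δ}. -/
/-!
The slab `0 ≤ x₀ ≤ 1` contains `Δ`, so a lattice point `β` of the interior of `2Δ` has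
`0 < β₀ < 2`, i.e. `β₀ = 1`, and then `α₀ = 0`. The points of `Δ` with `x₀ = 0` form the edge
`v₁v₂`, on which `x₁ + x₂ = 1`; hence `β = (1, 1 - t, t)` with `t = α₁ ∈ ℤ`. The facets
`x₀ - n x₁ + x₂ ≤ 1` (through `v₀, v₂, v₃`) and `n x₀ + n x₁ - x₂ ≤ n` (through `v₀, v₁, v₃`)
hold strictly on the interior of `2Δ`, and at `β` they read `t < 1` and `0 < t`.
-/

open Pointwise Matrix

theorem StrongDual.lt_of_mem_interior {E : Type*} [AddCommGroup E] [TopologicalSpace E]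
    [ContinuousAdd E] [Module ℝ E] [ContinuousSMul ℝ E] {f : StrongDual ℝ E} (hf : f ≠ 0)
    {S : Set E} {d : ℝ} (hS : ∀ x ∈ S, f x ≤ d) {x : E} (hx : x ∈ interior S) : f x < d := by
  have himage : f '' interior S ⊆ Set.Iio d := by
    rw [← interior_Iic]
    refine interior_maximal ?_ (f.isOpenMap_of_ne_zero hf _ isOpen_interior)
    exact (Set.image_mono interior_subset).trans (Set.image_subset_iff.2 hS)
  exact himage ⟨x, hx, rfl⟩

section DotProduct

variable {ι : Type*} [Fintype ι] {u : ι → ℝ} {s : Set (ι → ℝ)} {d : ℝ}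

theorem dotProduct_le_of_mem_convexHull (hs : ∀ v ∈ s, u ⬝ᵥ v ≤ d) :
    ∀ x ∈ convexHull ℝ s, u ⬝ᵥ x ≤ d :=
  convexHull_min hs (convex_halfSpace_le (dotProductBilin ℝ ℝ u).isLinear d)

theorem dotProduct_lt_of_mem_interior_smul_convexHull (hu : u ≠ 0) {c : ℝ} (hc : 0 ≤ c)
    (hs : ∀ v ∈ s, u ⬝ᵥ v ≤ d) {x : ι → ℝ} (hx : x ∈ interior (c • convexHull ℝ s)) :
    u ⬝ᵥ x < c * d := by
  classical
  let f : StrongDual ℝ (ι → ℝ) := LinearMap.toContinuousLinearMap (dotProductBilin ℝ ℝ u)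
  have hf : f ≠ 0 := fun hf ↦ hu <| funext fun i ↦ by
    simpa [f] using congrArg (fun g : StrongDual ℝ (ι → ℝ) ↦ g (Pi.single i 1)) hf
  refine StrongDual.lt_of_mem_interior (f := f) hf ?_ hx
  rintro _ ⟨y, hy, rfl⟩
  simpa [f, dotProduct_smul] using mul_le_mul_of_nonneg_left
    (dotProduct_le_of_mem_convexHull hs y hy) hc

end DotProduct

theorem vec3_lit_dotProduct {R : Type*} [NonUnitalNonAssocSemiring R] (a b c : R)
    (x : Fin 3 → R) : ![a, b, c] ⬝ᵥ x = a * x 0 + b * x 1 + c * x 2 :=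
  vec3_dotProduct _ _

def tetrahedronVertices (h n : ℕ) : Set (Fin 3 → ℝ) :=
  {![1, 1, (n : ℝ)], ![0, 1, 0], ![0, 0, 1], ![1, -(h : ℝ), -((n : ℝ) * (h : ℝ))]}

theorem tetrahedronVertices_dotProduct_le {h n : ℕ} {a b c d : ℝ} (h₀ : a + b + c * n ≤ d)
    (h₁ : b ≤ d) (h₂ : c ≤ d) (h₃ : a - b * h - c * (n * h) ≤ d) :
    ∀ v ∈ tetrahedronVertices h n, ![a, b, c] ⬝ᵥ v ≤ d := by
  simp only [tetrahedronVertices, Set.forall_mem_insert, Set.mem_singleton_iff, forall_eq,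
    vec3_dotProduct']
  refine ⟨?_, ?_, ?_, ?_⟩ <;> linarith

variable {h n : ℕ} {x : Fin 3 → ℝ}

theorem add_eq_one_of_mem_convexHull_tetrahedronVertices
    (hx : x ∈ convexHull ℝ (tetrahedronVertices h n)) (hx₀ : x 0 = 0) : x 1 + x 2 = 1 := by
  have upper := dotProduct_le_of_mem_convexHull (u := ![-(n : ℝ), 1, 1]) (d := 1)
    (tetrahedronVertices_dotProduct_le (by linarith) le_rfl le_rfl (by nlinarith)) x hx
  have lower := dotProduct_le_of_mem_convexHull
    (u := ![-((n : ℝ) * h + h + 1), -1, -1]) (d := -1)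
    (tetrahedronVertices_dotProduct_le (by nlinarith) le_rfl le_rfl
      (by linarith)) x hx
  rw [vec3_lit_dotProduct, hx₀] at upper lower
  linarith

theorem bounds_of_mem_interior_two_smul_convexHull_tetrahedronVertices
    (hx : x ∈ interior ((2 : ℝ) • convexHull ℝ (tetrahedronVertices h n))) :
    0 < x 0 ∧ x 0 < 2 ∧ x 0 - n * x 1 + x 2 < 2 ∧ n * x 0 + n * x 1 - x 2 < 2 * n := by
  have facet (a b c d : ℝ) (hu : ![a, b, c] ≠ 0)
      (hv : ∀ v ∈ tetrahedronVertices h n, ![a, b, c] ⬝ᵥ v ≤ d) :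
      a * x 0 + b * x 1 + c * x 2 < 2 * d := by
    rw [← vec3_lit_dotProduct]
    exact dotProduct_lt_of_mem_interior_smul_convexHull hu zero_le_two hv hx
  have hn : (0 : ℝ) ≤ n := n.cast_nonneg
  have hh : (0 : ℝ) ≤ h := h.cast_nonneg
  have h₁ := facet (-1) 0 0 0 (fun hu ↦ by simpa using congrFun hu 0)
    (tetrahedronVertices_dotProduct_le (by linarith) le_rfl le_rfl (by linarith))
  have h₂ := facet 1 0 0 1 (fun hu ↦ by simpa using congrFun hu 0)
    (tetrahedronVertices_dotProduct_le (by linarith) zero_le_one zero_le_one (by linarith))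
  have h₃ := facet 1 (-n) 1 1 (fun hu ↦ by simpa using congrFun hu 2)
    (tetrahedronVertices_dotProduct_le (by linarith) (by linarith) le_rfl (by linarith))
  have h₄ := facet n n (-1) n (fun hu ↦ by simpa using congrFun hu 2)
    (tetrahedronVertices_dotProduct_le (by linarith) le_rfl (by linarith) (by linarith))
  refine ⟨?_, ?_, ?_, ?_⟩ <;> linarith

theorem stmt5_general (h n : ℕ) :
    ¬ ∃ α β : Fin 3 → ℝ,
        α ∈ convexHull ℝ ({![1, 1, (n : ℝ)], ![0, 1, 0], ![0, 0, 1],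
              ![1, -(h : ℝ), -((n : ℝ) * (h : ℝ))]} : Set (Fin 3 → ℝ))
        ∧ (∀ i, ∃ m : ℤ, α i = (m : ℝ))
        ∧ β ∈ interior ((2 : ℝ) • convexHull ℝ ({![1, 1, (n : ℝ)], ![0, 1, 0], ![0, 0, 1],
              ![1, -(h : ℝ), -((n : ℝ) * (h : ℝ))]} : Set (Fin 3 → ℝ)))
        ∧ (∀ i, ∃ m : ℤ, β i = (m : ℝ))
        ∧ (![1, 1, 1] : Fin 3 → ℝ) = α + β := by
  rintro ⟨α, β, hα, hαℤ, hβ, hβℤ, hw⟩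
  have hsum (i : Fin 3) : α i + β i = 1 := by fin_cases i <;> exact (congrFun hw _).symm
  obtain ⟨hβ₀pos, hβ₀lt, hfacet₁, hfacet₂⟩ :=
    bounds_of_mem_interior_two_smul_convexHull_tetrahedronVertices hβ
  have hβ₀ : β 0 = 1 := by
    obtain ⟨k, hk⟩ := hβℤ 0
    rw [hk] at hβ₀pos hβ₀lt ⊢
    have : 0 < k := by exact_mod_cast hβ₀pos
    have : k < 2 := by exact_mod_cast hβ₀lt
    rw [show k = 1 by omega, Int.cast_one]
  have hedge := add_eq_one_of_mem_convexHull_tetrahedronVertices hα (by linarith [hsum 0])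
  have hβ₁ : β 1 = 1 - α 1 := by linarith [hsum 1]
  have hβ₂ : β 2 = α 1 := by linarith [hsum 2]
  obtain ⟨m, hm⟩ := hαℤ 1
  rw [hβ₀, hβ₁, hβ₂, hm] at hfacet₁ hfacet₂
  have hn : (0 : ℝ) ≤ n := n.cast_nonneg
  have hm₀ : (0 : ℝ) < m := by nlinarith
  have hm₁ : (m : ℝ) < 1 := by nlinarith
  have : 0 < m := by exact_mod_cast hm₀
  have : m < 1 := by exact_mod_cast hm₁
  omega

/-- The point `w = (1,1,1)` cannot be written as `α + β` with `α` a lattice point of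
the tetrahedron `Δ = conv{v0,v1,v2,v3}` and `β` a lattice point of the interior of
the dilate `2Δ`. -/
theorem stmt5 (h n : ℕ) (hh : 0 < h) (hn : 0 < n) :
    ¬ ∃ α β : Fin 3 → ℝ,
        α ∈ convexHull ℝ ({![1, 1, (n : ℝ)], ![0, 1, 0], ![0, 0, 1],
              ![1, -(h : ℝ), -((n : ℝ) * (h : ℝ))]} : Set (Fin 3 → ℝ))
        ∧ (∀ i, ∃ m : ℤ, α i = (m : ℝ))
        ∧ β ∈ interior ((2 : ℝ) • convexHull ℝ ({![1, 1, (n : ℝ)], ![0, 1, 0], ![0, 0, 1],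
              ![1, -(h : ℝ), -((n : ℝ) * (h : ℝ))]} : Set (Fin 3 → ℝ)))
        ∧ (∀ i, ∃ m : ℤ, β i = (m : ℝ))
        ∧ (![1, 1, 1] : Fin 3 → ℝ) = α + β :=
  stmt5_general h n
end

section
/- Let Δ be the convex hull of v0=(1,1,n), v1=(0,1,0), v2=(0,0,1), v3=(1,−h,−nh) in ℝ³ for positive integers h and n, and let 2Δ° denote the interior of the dilate 2Δ. Then 2Δ° ∩ ℤ³ = {(1,1,j) : 1 ≤ j ≤ n} ∪ {(1,−q,1−nq−r) : 0 ≤ q ≤ h−1, 1 ≤ r ≤ n}; in particular |2Δ° ∩ ℤ³| = n(h+1). -/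
open Pointwise

/-- A point in the interior of a set contained in a halfspace satisfies the strict inequality,
provided the functional takes a negative value somewhere. -/
lemma halfspace_pos {K : Set (Fin 3 → ℝ)} (c0 c1 c2 c3 : ℝ)
    (hK : ∀ z ∈ K, 0 ≤ c0 * z 0 + c1 * z 1 + c2 * z 2 + c3)
    (y : Fin 3 → ℝ) (hy : c0 * y 0 + c1 * y 1 + c2 * y 2 + c3 < 0)
    {x : Fin 3 → ℝ} (hx : x ∈ interior K) :
    0 < c0 * x 0 + c1 * x 1 + c2 * x 2 + c3 := by
  by_contra hcon
  push_neg at hcon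
  have hxK : x ∈ K := interior_subset hx
  have hFx : c0 * x 0 + c1 * x 1 + c2 * x 2 + c3 = 0 := le_antisymm hcon (hK x hxK)
  rcases Metric.mem_nhds_iff.1 (mem_interior_iff_mem_nhds.1 hx) with ⟨ε, hε, hball⟩
  set t : ℝ := ε / (2 * (dist y x + 1)) with ht_def
  have hd : (0:ℝ) ≤ dist y x := dist_nonneg
  have ht : 0 < t := by positivity
  have ht1 : t * dist y x < ε := by
    rw [ht_def, div_mul_eq_mul_div, div_lt_iff₀ (by positivity)]
    nlinarith
  set z : Fin 3 → ℝ := fun i => x i + t * (y i - x i) with hz_def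
  have hzball : z ∈ Metric.ball x ε := by
    rw [Metric.mem_ball, dist_pi_lt_iff hε]
    intro i
    have h1 : dist (z i) (x i) = t * dist (y i) (x i) := by
      rw [Real.dist_eq, Real.dist_eq, hz_def]
      rw [show x i + t * (y i - x i) - x i = t * (y i - x i) by ring]
      rw [abs_mul, abs_of_pos ht]
    have h2 : dist (y i) (x i) ≤ dist y x := dist_le_pi_dist y x i
    calc dist (z i) (x i) = t * dist (y i) (x i) := h1
      _ ≤ t * dist y x := by nlinarith
      _ < ε := ht1
  have hzK := hK z (hball hzball)
  have hFz : c0 * z 0 + c1 * z 1 + c2 * z 2 + c3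
      = (1 - t) * (c0 * x 0 + c1 * x 1 + c2 * x 2 + c3)
        + t * (c0 * y 0 + c1 * y 1 + c2 * y 2 + c3) := by
    simp only [hz_def]; ring
  rw [hFz, hFx] at hzK
  nlinarith

set_option maxHeartbeats 1000000 in
lemma hull_eq (h n : ℕ) (hh : 0 < h) (hn : 0 < n) :
    convexHull ℝ ({![2, 2, 2*(n:ℝ)], ![0, 2, 0], ![0, 0, 2],
        ![2, -(2*(h:ℝ)), -(2*(n:ℝ)*(h:ℝ))]} : Set (Fin 3 → ℝ)) =
    {x : Fin 3 → ℝ |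
      0 ≤ (1+(h:ℝ)+(n:ℝ)*(h:ℝ)) * x 0 + 1 * x 1 + 1 * x 2 + (-2) ∧
      0 ≤ (-1:ℝ) * x 0 + (n:ℝ) * x 1 + (-1) * x 2 + 2 ∧
      0 ≤ (-(n:ℝ)) * x 0 + (-(n:ℝ)) * x 1 + 1 * x 2 + 2*(n:ℝ) ∧
      0 ≤ (n:ℝ) * x 0 + (-1) * x 1 + (-1) * x 2 + 2} := by
  have hh1 : (1:ℝ) ≤ (h:ℝ) := by exact_mod_cast hh
  have hn1 : (1:ℝ) ≤ (n:ℝ) := by exact_mod_cast hn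
  apply Set.Subset.antisymm
  · apply convexHull_min
    · rintro v (rfl | rfl | rfl | rfl) <;>
        refine ⟨?_, ?_, ?_, ?_⟩ <;> simp <;> nlinarith
    · rintro x ⟨hx1, hx2, hx3, hx4⟩ y ⟨hy1, hy2, hy3, hy4⟩ a b ha hb hab
      refine ⟨?_, ?_, ?_, ?_⟩ <;> simp only [Pi.add_apply, Pi.smul_apply, smul_eq_mul] <;>
        nlinarith
  · rintro x ⟨hx1, hx2, hx3, hx4⟩
    set D : ℝ := (1+(h:ℝ))*(1+(n:ℝ)) with hD
    have hDpos : 0 < D := by positivity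
    have hNpos : (0:ℝ) < 1 + (n:ℝ) := by positivity
    set w : Fin 4 → ℝ := ![((1+(h:ℝ)+(n:ℝ)*(h:ℝ)) * x 0 + 1 * x 1 + 1 * x 2 + (-2)) / (2*D),
        ((-1:ℝ) * x 0 + (n:ℝ) * x 1 + (-1) * x 2 + 2) / (2*(1+(n:ℝ))),
        ((-(n:ℝ)) * x 0 + (-(n:ℝ)) * x 1 + 1 * x 2 + 2*(n:ℝ)) / (2*(1+(n:ℝ))),
        ((n:ℝ) * x 0 + (-1) * x 1 + (-1) * x 2 + 2) / (2*D)] with hw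
    set p : Fin 4 → (Fin 3 → ℝ) := ![![2, 2, 2*(n:ℝ)], ![0, 2, 0], ![0, 0, 2],
        ![2, -(2*(h:ℝ)), -(2*(n:ℝ)*(h:ℝ))]] with hp
    have hw0 : ∀ i ∈ Finset.univ, 0 ≤ w i := by
      intro i _
      fin_cases i <;>
        · simp [hw]
          apply div_nonneg
          · linarith
          · positivity
    have hws : ∑ i, w i = 1 := by
      simp only [hw, Fin.sum_univ_four]
      simp
      field_simp
      ring
    have hmemfun : ∀ i ∈ (Finset.univ : Finset (Fin 4)),
        p i ∈ ({![2, 2, 2*(n:ℝ)], ![0, 2, 0], ![0, 0, 2],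
          ![2, -(2*(h:ℝ)), -(2*(n:ℝ)*(h:ℝ))]} : Set (Fin 3 → ℝ)) := by
      intro i _
      fin_cases i <;> simp [hp]
    have hmem := Finset.centerMass_mem_convexHull (Finset.univ : Finset (Fin 4)) hw0
      (by rw [hws]; norm_num) hmemfun
    have hcm : Finset.univ.centerMass w p = x := by
      rw [Finset.centerMass_eq_of_sum_1 _ _ hws]
      funext j
      simp only [Fin.sum_univ_four, Pi.add_apply, Pi.smul_apply, smul_eq_mul, hw, hp]
      fin_cases j <;> simp <;> field_simp <;> ring
    rw [← hcm]
    exact hmem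

lemma open_cond (c0 c1 c2 c3 : ℝ) :
    IsOpen {x : Fin 3 → ℝ | 0 < c0 * x 0 + c1 * x 1 + c2 * x 2 + c3} :=
  isOpen_lt continuous_const (by fun_prop)

set_option maxHeartbeats 1000000 in
lemma interior_char (h n : ℕ) (hh : 0 < h) (hn : 0 < n) :
    interior ((2 : ℝ) • convexHull ℝ ({![1, 1, (n : ℝ)], ![0, 1, 0], ![0, 0, 1],
        ![1, -(h : ℝ), -((n : ℝ) * (h : ℝ))]} : Set (Fin 3 → ℝ)))
    = {x : Fin 3 → ℝ |
      0 < (1+(h:ℝ)+(n:ℝ)*(h:ℝ)) * x 0 + 1 * x 1 + 1 * x 2 + (-2) ∧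
      0 < (-1:ℝ) * x 0 + (n:ℝ) * x 1 + (-1) * x 2 + 2 ∧
      0 < (-(n:ℝ)) * x 0 + (-(n:ℝ)) * x 1 + 1 * x 2 + 2*(n:ℝ) ∧
      0 < (n:ℝ) * x 0 + (-1) * x 1 + (-1) * x 2 + 2} := by
  have hn0 : (0:ℝ) < (n:ℝ) := by exact_mod_cast hn
  have hsmul : (2 : ℝ) • convexHull ℝ ({![1, 1, (n : ℝ)], ![0, 1, 0], ![0, 0, 1],
        ![1, -(h : ℝ), -((n : ℝ) * (h : ℝ))]} : Set (Fin 3 → ℝ))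
      = convexHull ℝ ({![2, 2, 2*(n:ℝ)], ![0, 2, 0], ![0, 0, 2],
        ![2, -(2*(h:ℝ)), -(2*(n:ℝ)*(h:ℝ))]} : Set (Fin 3 → ℝ)) := by
    rw [← convexHull_smul]
    congr 1
    have e0 : (2:ℝ) • (![1, 1, (n:ℝ)] : Fin 3 → ℝ) = ![2, 2, 2*(n:ℝ)] := by
      funext i; fin_cases i <;> simp <;> ring
    have e1 : (2:ℝ) • (![0, 1, 0] : Fin 3 → ℝ) = ![0, 2, 0] := by
      funext i; fin_cases i <;> simp
    have e2 : (2:ℝ) • (![0, 0, 1] : Fin 3 → ℝ) = ![0, 0, 2] := by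
      funext i; fin_cases i <;> simp
    have e3 : (2:ℝ) • (![1, -(h:ℝ), -((n:ℝ)*(h:ℝ))] : Fin 3 → ℝ)
        = ![2, -(2*(h:ℝ)), -(2*(n:ℝ)*(h:ℝ))] := by
      funext i; fin_cases i <;> simp <;> ring
    rw [Set.smul_set_insert, Set.smul_set_insert, Set.smul_set_insert, Set.smul_set_singleton,
      e0, e1, e2, e3]
  rw [hsmul]
  have hK := hull_eq h n hh hn
  apply Set.Subset.antisymm
  · intro x hx
    have hsub : ∀ F : (Fin 3 → ℝ) → Prop, True := fun _ => trivial
    refine ⟨?_, ?_, ?_, ?_⟩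
    · exact halfspace_pos (1+(h:ℝ)+(n:ℝ)*(h:ℝ)) 1 1 (-2)
        (fun z hz => by rw [hK] at hz; exact hz.1) ![0,0,0] (by norm_num [show (![0,0,0] : Fin 3 → ℝ) 2 = 0 from rfl]) hx
    · exact halfspace_pos (-1) (n:ℝ) (-1) 2
        (fun z hz => by rw [hK] at hz; exact hz.2.1) ![0,0,3] (by norm_num [show (![0,0,3] : Fin 3 → ℝ) 2 = 3 from rfl]) hx
    · exact halfspace_pos (-(n:ℝ)) (-(n:ℝ)) 1 (2*(n:ℝ))
        (fun z hz => by rw [hK] at hz; exact hz.2.2.1) ![0,3,0]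
        (by simp only [Matrix.cons_val_zero, Matrix.cons_val_one, Matrix.head_cons,
          Matrix.cons_val_two, Matrix.tail_cons]; nlinarith) hx
    · exact halfspace_pos (n:ℝ) (-1) (-1) 2
        (fun z hz => by rw [hK] at hz; exact hz.2.2.2) ![0,3,0] (by norm_num [show (![0,3,0] : Fin 3 → ℝ) 2 = 0 from rfl]) hx
  · apply interior_maximal
    · intro x hx
      rw [hK]
      exact ⟨hx.1.le, hx.2.1.le, hx.2.2.1.le, hx.2.2.2.le⟩
    · have : {x : Fin 3 → ℝ |
          0 < (1+(h:ℝ)+(n:ℝ)*(h:ℝ)) * x 0 + 1 * x 1 + 1 * x 2 + (-2) ∧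
          0 < (-1:ℝ) * x 0 + (n:ℝ) * x 1 + (-1) * x 2 + 2 ∧
          0 < (-(n:ℝ)) * x 0 + (-(n:ℝ)) * x 1 + 1 * x 2 + 2*(n:ℝ) ∧
          0 < (n:ℝ) * x 0 + (-1) * x 1 + (-1) * x 2 + 2}
          = {x : Fin 3 → ℝ | 0 < (1+(h:ℝ)+(n:ℝ)*(h:ℝ)) * x 0 + 1 * x 1 + 1 * x 2 + (-2)}
          ∩ ({x | 0 < (-1:ℝ) * x 0 + (n:ℝ) * x 1 + (-1) * x 2 + 2}
          ∩ ({x | 0 < (-(n:ℝ)) * x 0 + (-(n:ℝ)) * x 1 + 1 * x 2 + 2*(n:ℝ)}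
          ∩ {x | 0 < (n:ℝ) * x 0 + (-1) * x 1 + (-1) * x 2 + 2})) := by
        ext x; simp only [Set.mem_setOf_eq, Set.mem_inter_iff]
      rw [this]
      exact (open_cond _ _ _ _).inter ((open_cond _ _ _ _).inter
        ((open_cond _ _ _ _).inter (open_cond _ _ _ _)))

set_option maxHeartbeats 1600000 in
/-- The lattice points in the interior of the dilate `2Δ` of the tetrahedron
`Δ = conv{v0,v1,v2,v3}` are exactly
`{(1,1,j) : 1 ≤ j ≤ n} ∪ {(1,-q,1-n*q-r) : 0 ≤ q ≤ h-1, 1 ≤ r ≤ n}`;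
in particular there are exactly `n*(h+1)` of them. -/
theorem stmt7 (h n : ℕ) (hh : 0 < h) (hn : 0 < n) :
    {x : Fin 3 → ℝ |
        x ∈ interior ((2 : ℝ) • convexHull ℝ ({![1, 1, (n : ℝ)], ![0, 1, 0], ![0, 0, 1],
              ![1, -(h : ℝ), -((n : ℝ) * (h : ℝ))]} : Set (Fin 3 → ℝ)))
        ∧ ∀ i, ∃ m : ℤ, x i = (m : ℝ)}
      = ((fun j : ℕ => (![1, 1, (j : ℝ)] : Fin 3 → ℝ)) '' {j : ℕ | 1 ≤ j ∧ j ≤ n})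
        ∪ ((fun p : ℕ × ℕ =>
              (![1, -(p.1 : ℝ), 1 - (n : ℝ) * (p.1 : ℝ) - (p.2 : ℝ)] : Fin 3 → ℝ)) ''
            {p : ℕ × ℕ | p.1 ≤ h - 1 ∧ 1 ≤ p.2 ∧ p.2 ≤ n})
    ∧ {x : Fin 3 → ℝ |
        x ∈ interior ((2 : ℝ) • convexHull ℝ ({![1, 1, (n : ℝ)], ![0, 1, 0], ![0, 0, 1],
              ![1, -(h : ℝ), -((n : ℝ) * (h : ℝ))]} : Set (Fin 3 → ℝ)))
        ∧ ∀ i, ∃ m : ℤ, x i = (m : ℝ)}.ncard = n * (h + 1) := by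
  have hchar := interior_char h n hh hn
  have hh1 : (1:ℤ) ≤ (h:ℤ) := by exact_mod_cast hh
  have hn1 : (1:ℤ) ≤ (n:ℤ) := by exact_mod_cast hn
  have hseteq : {x : Fin 3 → ℝ |
        x ∈ interior ((2 : ℝ) • convexHull ℝ ({![1, 1, (n : ℝ)], ![0, 1, 0], ![0, 0, 1],
              ![1, -(h : ℝ), -((n : ℝ) * (h : ℝ))]} : Set (Fin 3 → ℝ)))
        ∧ ∀ i, ∃ m : ℤ, x i = (m : ℝ)}
      = ((fun j : ℕ => (![1, 1, (j : ℝ)] : Fin 3 → ℝ)) '' {j : ℕ | 1 ≤ j ∧ j ≤ n})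
        ∪ ((fun p : ℕ × ℕ =>
              (![1, -(p.1 : ℝ), 1 - (n : ℝ) * (p.1 : ℝ) - (p.2 : ℝ)] : Fin 3 → ℝ)) ''
            {p : ℕ × ℕ | p.1 ≤ h - 1 ∧ 1 ≤ p.2 ∧ p.2 ≤ n}) := by
    ext x
    simp only [Set.mem_setOf_eq, hchar, Set.mem_union, Set.mem_image]
    constructor
    · rintro ⟨⟨hA, hB, hC, hE⟩, hint⟩
      obtain ⟨a, ha⟩ := hint 0
      obtain ⟨b, hb⟩ := hint 1
      obtain ⟨c, hc⟩ := hint 2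
      rw [ha, hb, hc] at hA hB hC hE
      have hA' : (0:ℤ) < (1+(h:ℤ)+(n:ℤ)*(h:ℤ))*a + b + c - 2 := by rify; linarith
      have hB' : (0:ℤ) < -a + (n:ℤ)*b - c + 2 := by rify; linarith
      have hC' : (0:ℤ) < -((n:ℤ))*a - (n:ℤ)*b + c + 2*(n:ℤ) := by rify; linarith
      have hE' : (0:ℤ) < (n:ℤ)*a - b - c + 2 := by rify; linarith
      have hNpos : (0:ℤ) < 1 + (n:ℤ) := by linarith
      have ha1 : a = 1 := by
        have hcoef : (0:ℤ) < 1 + (h:ℤ) + (n:ℤ)*(h:ℤ) + (n:ℤ) := by positivity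
        have hsum : (0:ℤ) < (1 + (h:ℤ) + (n:ℤ)*(h:ℤ) + (n:ℤ)) * a := by nlinarith
        have ha_pos : 0 < a := by nlinarith [hsum, hcoef]
        have hsum2 : (0:ℤ) < (1 + (n:ℤ)) * (2 - a) := by nlinarith
        have ha2 : a < 2 := by nlinarith [hsum2, hNpos]
        omega
      subst ha1
      have hr1 : 1 ≤ (n:ℤ)*b + 1 - c := by linarith
      have hr2 : (n:ℤ)*b + 1 - c ≤ (n:ℤ) := by linarith
      rcases le_or_gt 1 b with hb1 | hb0
      · -- b = 1, first family
        have hbe : b = 1 := by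
          have hsum4 : (1 + (n:ℤ)) * b < 2 * (1 + (n:ℤ)) := by nlinarith
          have : b < 2 := by nlinarith [hsum4, hNpos]
          omega
        subst hbe
        have hc1 : 1 ≤ c := by linarith
        have hc2 : c ≤ (n:ℤ) := by linarith
        left
        refine ⟨c.toNat, ⟨by omega, by omega⟩, ?_⟩
        funext i
        fin_cases i
        · show (1:ℝ) = x 0
          rw [ha]; norm_num
        · show (1:ℝ) = x 1
          rw [hb]; norm_num
        · show ((c.toNat : ℕ) : ℝ) = x 2
          rw [hc]; norm_cast; omega
      · -- b ≤ 0, second family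
        have hb0' : b ≤ 0 := by omega
        have hq : -b ≤ (h:ℤ) - 1 := by
          have hs5 : (0:ℤ) < (1 + (n:ℤ)) * ((h:ℤ) + b) := by nlinarith
          have : (0:ℤ) < (h:ℤ) + b := by nlinarith [hs5, hNpos]
          linarith
        obtain ⟨sZ, hsZ⟩ : ∃ s : ℤ, s = (n:ℤ)*b + 1 - c := ⟨_, rfl⟩
        rw [← hsZ] at hr1 hr2
        right
        refine ⟨((-b).toNat, sZ.toNat), ⟨by omega, by omega, by omega⟩, ?_⟩
        have e1 : (((-b).toNat : ℕ) : ℝ) = -(b:ℝ) := by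
          exact_mod_cast congrArg (fun z : ℤ => (z : ℝ))
            (Int.toNat_of_nonneg (by omega : (0:ℤ) ≤ -b))
        have e2 : ((sZ.toNat : ℕ) : ℝ) = (n:ℝ)*(b:ℝ) + 1 - (c:ℝ) := by
          have h1 : ((sZ.toNat : ℤ) : ℝ) = ((sZ : ℤ) : ℝ) := by
            exact_mod_cast congrArg (fun z : ℤ => (z : ℝ)) (Int.toNat_of_nonneg (by omega))
          push_cast at h1
          rw [h1, hsZ]
          push_cast
          ring
        funext i
        fin_cases i
        · show (1:ℝ) = x 0
          rw [ha]; norm_num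
        · show -(((-b).toNat : ℕ) : ℝ) = x 1
          rw [hb, e1]; ring
        · show 1 - (n:ℝ) * (((-b).toNat : ℕ) : ℝ) - ((sZ.toNat : ℕ) : ℝ) = x 2
          rw [hc, e1, e2]; ring
    · rintro (⟨j, ⟨hj1, hj2⟩, rfl⟩ | ⟨⟨q, r⟩, ⟨hq, hr1, hr2⟩, rfl⟩)
      · have hj1' : (1:ℝ) ≤ (j:ℝ) := by exact_mod_cast hj1
        have hj2' : (j:ℝ) ≤ (n:ℝ) := by exact_mod_cast hj2
        have hh1' : (1:ℝ) ≤ (h:ℝ) := by exact_mod_cast hh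
        have hn1' : (1:ℝ) ≤ (n:ℝ) := by exact_mod_cast hn
        refine ⟨⟨?_, ?_, ?_, ?_⟩, ?_⟩
        · simp only [Matrix.cons_val_zero, Matrix.cons_val_one, Matrix.head_cons,
            Matrix.cons_val_two, Matrix.tail_cons]; nlinarith
        · simp only [Matrix.cons_val_zero, Matrix.cons_val_one, Matrix.head_cons,
            Matrix.cons_val_two, Matrix.tail_cons]; nlinarith
        · simp only [Matrix.cons_val_zero, Matrix.cons_val_one, Matrix.head_cons,
            Matrix.cons_val_two, Matrix.tail_cons]; nlinarith
        · simp only [Matrix.cons_val_zero, Matrix.cons_val_one, Matrix.head_cons,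
            Matrix.cons_val_two, Matrix.tail_cons]; nlinarith
        · intro i
          fin_cases i
          · exact ⟨1, by norm_num⟩
          · exact ⟨1, by norm_num⟩
          · exact ⟨(j:ℤ), by show ((j:ℕ):ℝ) = _; push_cast; ring⟩
      · have hq' : (q:ℤ) ≤ (h:ℤ) - 1 := by omega
        have hq'' : (q:ℝ) ≤ (h:ℝ) - 1 := by rify at hq'; linarith
        have hr1' : (1:ℝ) ≤ (r:ℝ) := by exact_mod_cast hr1
        have hr2' : (r:ℝ) ≤ (n:ℝ) := by exact_mod_cast hr2
        have hh1' : (1:ℝ) ≤ (h:ℝ) := by exact_mod_cast hh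
        have hn1' : (1:ℝ) ≤ (n:ℝ) := by exact_mod_cast hn
        have hq0 : (0:ℝ) ≤ (q:ℝ) := Nat.cast_nonneg q
        have hprod1 : (0:ℝ) ≤ (1+(n:ℝ))*((h:ℝ)-1-(q:ℝ)) :=
          mul_nonneg (by linarith) (by linarith)
        have hprod2 : (0:ℝ) ≤ (n:ℝ)*(q:ℝ) := mul_nonneg (by linarith) hq0
        refine ⟨⟨?_, ?_, ?_, ?_⟩, ?_⟩
        · simp only [Matrix.cons_val_zero, Matrix.cons_val_one, Matrix.head_cons,
            Matrix.cons_val_two, Matrix.tail_cons]; nlinarith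
        · simp only [Matrix.cons_val_zero, Matrix.cons_val_one, Matrix.head_cons,
            Matrix.cons_val_two, Matrix.tail_cons]; nlinarith
        · simp only [Matrix.cons_val_zero, Matrix.cons_val_one, Matrix.head_cons,
            Matrix.cons_val_two, Matrix.tail_cons]; nlinarith
        · simp only [Matrix.cons_val_zero, Matrix.cons_val_one, Matrix.head_cons,
            Matrix.cons_val_two, Matrix.tail_cons]; nlinarith
        · intro i
          fin_cases i
          · exact ⟨1, by norm_num⟩
          · exact ⟨-(q:ℤ), by show -((q:ℕ):ℝ) = _; push_cast; ring⟩
          · exact ⟨1 - (n:ℤ)*(q:ℤ) - (r:ℤ), by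
              show 1 - (n:ℝ) * ((q:ℕ):ℝ) - ((r:ℕ):ℝ) = _; push_cast; ring⟩
  refine ⟨hseteq, ?_⟩
  rw [hseteq]
  have hF1 : ((fun j : ℕ => (![1, 1, (j : ℝ)] : Fin 3 → ℝ)) '' {j : ℕ | 1 ≤ j ∧ j ≤ n})
      = ↑((Finset.Icc 1 n).image (fun j : ℕ => (![1, 1, (j : ℝ)] : Fin 3 → ℝ))) := by
    rw [Finset.coe_image]
    congr 1
    ext j; simp
  have hF2 : ((fun p : ℕ × ℕ =>
          (![1, -(p.1 : ℝ), 1 - (n : ℝ) * (p.1 : ℝ) - (p.2 : ℝ)] : Fin 3 → ℝ)) ''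
        {p : ℕ × ℕ | p.1 ≤ h - 1 ∧ 1 ≤ p.2 ∧ p.2 ≤ n})
      = ↑(((Finset.Icc 0 (h-1)) ×ˢ (Finset.Icc 1 n)).image (fun p : ℕ × ℕ =>
          (![1, -(p.1 : ℝ), 1 - (n : ℝ) * (p.1 : ℝ) - (p.2 : ℝ)] : Fin 3 → ℝ))) := by
    have hsets : {p : ℕ × ℕ | p.1 ≤ h - 1 ∧ 1 ≤ p.2 ∧ p.2 ≤ n}
        = ↑((Finset.Icc 0 (h-1)) ×ˢ (Finset.Icc 1 n)) := by
      ext p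
      simp only [Set.mem_setOf_eq, Finset.coe_product, Set.mem_prod, Finset.mem_coe,
        Finset.mem_Icc]
      omega
    rw [hsets, Finset.coe_image]
  rw [hF1, hF2, ← Finset.coe_union, Set.ncard_coe_finset]
  have hdisj : Disjoint ((Finset.Icc 1 n).image (fun j : ℕ => (![1, 1, (j : ℝ)] : Fin 3 → ℝ)))
      (((Finset.Icc 0 (h-1)) ×ˢ (Finset.Icc 1 n)).image (fun p : ℕ × ℕ =>
          (![1, -(p.1 : ℝ), 1 - (n : ℝ) * (p.1 : ℝ) - (p.2 : ℝ)] : Fin 3 → ℝ))) := by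
    rw [Finset.disjoint_left]
    rintro u hu1 hu2
    simp only [Finset.mem_image] at hu1 hu2
    obtain ⟨j, _, rfl⟩ := hu1
    obtain ⟨p, _, hpu⟩ := hu2
    have := congrFun hpu 1
    simp at this
    have hq0 : (0:ℝ) ≤ (p.1:ℝ) := Nat.cast_nonneg _
    linarith
  rw [Finset.card_union_of_disjoint hdisj]
  have hc1 : ((Finset.Icc 1 n).image (fun j : ℕ => (![1, 1, (j : ℝ)] : Fin 3 → ℝ))).card = n := by
    rw [Finset.card_image_of_injOn, Nat.card_Icc]
    · omega
    · intro j _ j' _ hjj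
      have := congrFun hjj 2
      simp at this
      exact_mod_cast this
  have hc2 : (((Finset.Icc 0 (h-1)) ×ˢ (Finset.Icc 1 n)).image (fun p : ℕ × ℕ =>
      (![1, -(p.1 : ℝ), 1 - (n : ℝ) * (p.1 : ℝ) - (p.2 : ℝ)] : Fin 3 → ℝ))).card = h * n := by
    rw [Finset.card_image_of_injOn, Finset.card_product, Nat.card_Icc, Nat.card_Icc]
    · simp; omega
    · intro p _ p' _ hpp
      have h1 := congrFun hpp 1
      have h2 := congrFun hpp 2
      simp at h1 h2
      have hp1 : p.1 = p'.1 := by exact_mod_cast h1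
      have hp2 : p.2 = p'.2 := by
        rw [hp1] at h2
        have : (p.2:ℝ) = (p'.2:ℝ) := by linarith
        exact_mod_cast this
      exact Prod.ext hp1 hp2
  rw [hc1, hc2]
  ring
end

section
/- Let Δ be the convex hull of v0=(1,1,n), v1=(0,1,0), v2=(0,0,1), v3=(1,−h,−nh) in ℝ³ for positive integers h and n. Then the open simplex Δ° (interior of Δ) contains no lattice points: Δ° ∩ ℤ³ = ∅. -/
/-!
Every vertex of `Δ` has first coordinate `0` or `1`, so `Δ` lies in the slab `0 ≤ x₀ ≤ 1`
and its interior in the open slab `0 < x₀ < 1`, which contains no integer.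
-/

open Set

theorem interior_convexHull_subset_eval_preimage_Ioo {ι : Type*} {s : Set (ι → ℝ)} (i : ι)
    {a b : ℝ} (hs : s ⊆ (fun y => y i) ⁻¹' Icc a b) :
    interior (convexHull ℝ s) ⊆ (fun y => y i) ⁻¹' Ioo a b := by
  have hslab : convexHull ℝ s ⊆ (fun y => y i) ⁻¹' Icc a b :=
    convexHull_min hs <|
      (convex_Icc a b).linear_preimage (LinearMap.proj (R := ℝ) (φ := fun _ : ι => ℝ) i)
  calc interior (convexHull ℝ s)
      _ ⊆ interior ((fun y => y i) ⁻¹' Icc a b) := interior_mono hslab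
      _ = (fun y => y i) ⁻¹' Ioo a b := by
        rw [← (isOpenMap_eval i).preimage_interior_eq_interior_preimage (continuous_apply i),
          interior_Icc]

theorem Int.cast_notMem_Ioo_zero_one (m : ℤ) : (m : ℝ) ∉ Ioo (0 : ℝ) 1 := by
  rintro ⟨h0, h1⟩
  have : (0 : ℤ) < m := by exact_mod_cast h0
  have : m < 1 := by exact_mod_cast h1
  omega

theorem stmt8_general (h n : ℕ) :
    {x : Fin 3 → ℝ |
        x ∈ interior (convexHull ℝ ({![1, 1, (n : ℝ)], ![0, 1, 0], ![0, 0, 1],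
              ![1, -(h : ℝ), -((n : ℝ) * (h : ℝ))]} : Set (Fin 3 → ℝ)))
        ∧ ∀ i, ∃ m : ℤ, x i = (m : ℝ)} = ∅ := by
  refine eq_empty_of_forall_notMem fun x ⟨hx, hlattice⟩ => ?_
  have hvertices : ({![1, 1, (n : ℝ)], ![0, 1, 0], ![0, 0, 1],
      ![1, -(h : ℝ), -((n : ℝ) * (h : ℝ))]} : Set (Fin 3 → ℝ)) ⊆
        (fun y => y 0) ⁻¹' Icc 0 1 := by
    simp [insert_subset_iff]
  obtain ⟨m, hm⟩ := hlattice 0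
  have hslab := interior_convexHull_subset_eval_preimage_Ioo 0 hvertices hx
  rw [mem_preimage, hm] at hslab
  exact Int.cast_notMem_Ioo_zero_one m hslab

/-- The interior of the tetrahedron `Δ = conv{v0,v1,v2,v3}` contains no lattice points. -/
theorem stmt8 (h n : ℕ) (hh : 0 < h) (hn : 0 < n) :
    {x : Fin 3 → ℝ |
        x ∈ interior (convexHull ℝ ({![1, 1, (n : ℝ)], ![0, 1, 0], ![0, 0, 1],
              ![1, -(h : ℝ), -((n : ℝ) * (h : ℝ))]} : Set (Fin 3 → ℝ)))
        ∧ ∀ i, ∃ m : ℤ, x i = (m : ℝ)} = ∅ :=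
  stmt8_general h n
end

section
/- For the tetrahedron Δ with vertices v0=(1,1,n), v1=(0,1,0), v2=(0,0,1), v3=(1,−h,−nh), the set S_Δ = { r_0 v_0 + r_1 v_1 + r_2 v_2 + r_3 v_3 ∈ ℤ³ : 0 ≤ r_i < 1, r_0+r_1+r_2+r_3 ∈ ℕ } has exactly 1 element of height 0, exactly h elements of height 1, and exactly n(h+1) elements of height 2, where the height of an element is r_0+r_1+r_2+r_3; in particular |S_Δ| = (n+1)(h+1). -/
/-!
Modulo `ℤ⁴`, the coefficient vectors `r` with `∑ rᵢ vᵢ ∈ ℤ³` and `∑ rᵢ ∈ ℤ` form the cyclic group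
of order `N = (n + 1)(h + 1)` generated by `g = (1/N, -1/(n+1), 1/(n+1), -1/N)`: eliminating
`r₁, r₂, r₃` from the integrality conditions leaves `N r₀ ∈ ℤ`. Hence `S_Δ` consists of the
fractional parts `{t g}`, `0 ≤ t < N`, which are distinct since their first coordinate is `t / N`.
As `{x} + {-x}` is `0` or `1` according as `x` is an integer or not, the height of `{t g}` is
`[t ≠ 0] + [n + 1 ∤ t]`, and counting the `t` of each height gives `1`, `h` and `n (h + 1)`.
-/

open Finset

theorem Int.fract_add_fract_neg {R : Type*} [Ring R] [LinearOrder R] [IsStrictOrderedRing R]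
    [FloorRing R] (x : R) : fract x + fract (-x) = if fract x = 0 then 0 else 1 := by
  split_ifs with hx
  · simp [hx]
  · rw [fract_neg hx]
    abel

theorem Int.fract_natCast_div_eq_zero_iff {k : Type*} [Field k] [LinearOrder k]
    [IsStrictOrderedRing k] [FloorRing k] {t d : ℕ} (hd : 0 < d) :
    fract ((t : k) / d) = 0 ↔ d ∣ t := by
  rw [fract_div_natCast_eq_div_natCast_mod, div_eq_zero_iff]
  simp [Nat.dvd_iff_mod_eq_zero, hd.ne']

theorem Nat.card_filter_dvd_range_mul {p : ℕ} (hp : 0 < p) (q : ℕ) :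
    #{t ∈ range (p * q) | p ∣ t} = q := by
  have : {t ∈ range (p * q) | p ∣ t} = (range q).map ⟨(p * ·), mul_right_injective₀ hp.ne'⟩ := by
    ext t
    simp only [mem_filter, mem_range, mem_map, Function.Embedding.coeFn_mk]
    constructor
    · rintro ⟨ht, k, rfl⟩
      exact ⟨k, lt_of_mul_lt_mul_left ht hp.le, rfl⟩
    · rintro ⟨k, hk, rfl⟩
      exact ⟨Nat.mul_lt_mul_of_pos_left hk hp, dvd_mul_right p k⟩
  rw [this, card_map, card_range]

def tetraVertices (h n : ℕ) : Fin 4 → Fin 3 → ℝ :=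
  ![![1, 1, (n : ℝ)], ![0, 1, 0], ![0, 0, 1], ![1, -(h : ℝ), -((n : ℝ) * (h : ℝ))]]

def boxPoints (h n : ℕ) : Set (Fin 4 → ℝ) :=
  {r | (∀ i, 0 ≤ r i ∧ r i < 1) ∧ (∃ k : ℕ, ∑ i, r i = (k : ℝ))
      ∧ ∀ j, ∃ m : ℤ, (∑ i, r i • tetraVertices h n i) j = (m : ℝ)}

theorem sum_smul_tetraVertices (h n : ℕ) (r : Fin 4 → ℝ) :
    ∑ i, r i • tetraVertices h n i =
      ![r 0 + r 3, r 0 + r 1 - h * r 3, n * r 0 + r 2 - n * h * r 3] := by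
  ext j
  fin_cases j <;> simp [tetraVertices, Fin.sum_univ_four] <;> ring

noncomputable def boxPoint (h n t : ℕ) : Fin 4 → ℝ :=
  ![Int.fract ((t : ℝ) / ((n + 1) * (h + 1) : ℕ)), Int.fract (-((t : ℝ) / (n + 1 : ℕ))),
    Int.fract ((t : ℝ) / (n + 1 : ℕ)), Int.fract (-((t : ℝ) / ((n + 1) * (h + 1) : ℕ)))]

def boxHeight (h n t : ℕ) : ℕ :=
  (if (n + 1) * (h + 1) ∣ t then 0 else 1) + (if n + 1 ∣ t then 0 else 1)

theorem sum_boxPoint (h n t : ℕ) : ∑ i, boxPoint h n t i = boxHeight h n t := by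
  set U : ℝ := t / ((n + 1) * (h + 1) : ℕ)
  set W : ℝ := t / (n + 1 : ℕ)
  calc ∑ i, boxPoint h n t i
      = Int.fract U + Int.fract (-W) + Int.fract W + Int.fract (-U) := Fin.sum_univ_four _
    _ = (Int.fract U + Int.fract (-U)) + (Int.fract W + Int.fract (-W)) := by ring
    _ = boxHeight h n t := by
      simp only [U, W, Int.fract_add_fract_neg, boxHeight,
        Int.fract_natCast_div_eq_zero_iff (Nat.mul_pos n.succ_pos h.succ_pos),
        Int.fract_natCast_div_eq_zero_iff n.succ_pos]
      split_ifs <;> norm_num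

theorem boxPoint_mem_boxPoints (h n t : ℕ) : boxPoint h n t ∈ boxPoints h n := by
  set u : ℝ := t / ((n + 1) * (h + 1) : ℕ)
  set w : ℝ := t / (n + 1 : ℕ)
  have hw : w = (h + 1) * u := by simp only [u, w]; push_cast; field_simp
  have hwt : (n + 1) * w = t := by simp only [w]; push_cast; field_simp
  have hpoint : boxPoint h n t = ![u - ⌊u⌋, -w - ⌊-w⌋, w - ⌊w⌋, -u - ⌊-u⌋] := rfl
  refine ⟨fun i => ?_, ⟨boxHeight h n t, sum_boxPoint h n t⟩, fun j => ?_⟩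
  · fin_cases i <;> simp [boxPoint, Int.fract_nonneg, Int.fract_lt_one]
  clear_value u w
  rw [hpoint, sum_smul_tetraVertices]
  fin_cases j
  · exact ⟨-(⌊u⌋ + ⌊-u⌋), by simp [-Int.self_sub_floor]; ring⟩
  · exact ⟨-⌊u⌋ - ⌊-w⌋ + h * ⌊-u⌋, by simp [-Int.self_sub_floor]; linear_combination -hw⟩
  · exact ⟨t - n * ⌊u⌋ - ⌊w⌋ + n * h * ⌊-u⌋, by
      simp [-Int.self_sub_floor]; linear_combination -(n : ℝ) * hw + hwt⟩

theorem exists_boxPoint_eq {h n : ℕ} {r : Fin 4 → ℝ} (hr : r ∈ boxPoints h n) :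
    ∃ t < (n + 1) * (h + 1), boxPoint h n t = r := by
  obtain ⟨hbox, ⟨k, hk⟩, hint⟩ := hr
  rw [sum_smul_tetraVertices] at hint
  obtain ⟨a, ha⟩ := hint 0
  obtain ⟨b, hb⟩ := hint 1
  obtain ⟨c, hc⟩ := hint 2
  simp only [Matrix.cons_val] at ha hb hc
  rw [Fin.sum_univ_four] at hk
  obtain ⟨T, hT⟩ : ∃ T : ℤ, ((n + 1) * (h + 1) : ℝ) * r 0 = T :=
    ⟨b + h * a + c + n * h * a + a - k, by
      push_cast; linear_combination hb + (h + n * h + 1 : ℝ) * ha + hc - hk⟩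
  have hr0 := hbox 0
  obtain ⟨t, rfl⟩ := Int.eq_ofNat_of_zero_le (by
    have : (0 : ℝ) ≤ T := hT ▸ mul_nonneg (by positivity) hr0.1
    exact_mod_cast this)
  push_cast at hT
  have htN : t < (n + 1) * (h + 1) := by
    have : (t : ℝ) < (n + 1) * (h + 1) := by
      rw [← hT]; exact mul_lt_of_lt_one_right (by positivity) hr0.2
    exact_mod_cast this
  refine ⟨t, htN, funext fun i => ?_⟩
  have hu : (t : ℝ) / ((n + 1) * (h + 1) : ℕ) = r 0 := by
    push_cast; rw [← hT]; field_simp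
  have hw : (t : ℝ) / (n + 1 : ℕ) = (h + 1) * r 0 := by
    push_cast; rw [← hT]; field_simp
  fin_cases i <;>
    simp only [boxPoint, hu, hw, Fin.reduceFinMk, Fin.isValue, Matrix.cons_val] <;>
    rw [Int.fract_eq_iff]
  · exact ⟨hr0.1, hr0.2, 0, by simp⟩
  · exact ⟨(hbox 1).1, (hbox 1).2, -b - h * a, by
      push_cast; linear_combination -hb - (h : ℝ) * ha⟩
  · exact ⟨(hbox 2).1, (hbox 2).2, t - c - n * h * a, by
      push_cast; linear_combination -hc - (n * h : ℝ) * ha + hT⟩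
  · exact ⟨(hbox 3).1, (hbox 3).2, -a, by push_cast; linear_combination -ha⟩

theorem boxPoint_injOn (h n : ℕ) : Set.InjOn (boxPoint h n) (range ((n + 1) * (h + 1))) := by
  intro s hs t ht hst
  have h0 := congrFun hst 0
  simp only [coe_range, Set.mem_Iio] at hs ht
  simp only [boxPoint, Matrix.cons_val_zero, Int.fract_div_natCast_eq_div_natCast_mod,
    Nat.mod_eq_of_lt hs, Nat.mod_eq_of_lt ht] at h0
  exact_mod_cast (div_left_inj' (by positivity)).1 h0

theorem boxPoints_eq_image (h n : ℕ) :
    boxPoints h n = boxPoint h n '' range ((n + 1) * (h + 1)) := by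
  ext r
  constructor
  · intro hr
    obtain ⟨t, ht, rfl⟩ := exists_boxPoint_eq hr
    exact ⟨t, by simpa using ht, rfl⟩
  · rintro ⟨t, -, rfl⟩
    exact boxPoint_mem_boxPoints h n t

theorem ncard_boxPoints_sep_sum_eq (h n c : ℕ) :
    {r ∈ boxPoints h n | ∑ i, r i = c}.ncard =
      #{t ∈ range ((n + 1) * (h + 1)) | boxHeight h n t = c} := by
  have himage : {r ∈ boxPoints h n | ∑ i, r i = c} =
      boxPoint h n '' ↑{t ∈ range ((n + 1) * (h + 1)) | boxHeight h n t = c} := by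
    ext r
    rw [boxPoints_eq_image]
    simp only [Set.mem_image, mem_coe, mem_filter]
    constructor
    · rintro ⟨⟨t, ht, rfl⟩, hsum⟩
      exact ⟨t, ⟨ht, by exact_mod_cast (sum_boxPoint h n t).symm.trans hsum⟩, rfl⟩
    · rintro ⟨t, ⟨ht, rfl⟩, rfl⟩
      exact ⟨⟨t, ht, rfl⟩, sum_boxPoint h n t⟩
  rw [himage, ((boxPoint_injOn h n).mono (coe_subset.2 (filter_subset _ _))).ncard_image,
    Set.ncard_coe_finset]

theorem boxHeight_of_lt {h n t : ℕ} (ht : t < (n + 1) * (h + 1)) :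
    boxHeight h n t = (if t = 0 then 0 else 1) + (if n + 1 ∣ t then 0 else 1) := by
  have : (n + 1) * (h + 1) ∣ t ↔ t = 0 :=
    ⟨fun hdvd => Nat.eq_zero_of_dvd_of_lt hdvd ht, fun h0 => h0 ▸ dvd_zero _⟩
  simp only [boxHeight, this]

theorem filter_boxHeight_eq_zero (h n : ℕ) :
    {t ∈ range ((n + 1) * (h + 1)) | boxHeight h n t = 0} = {0} := by
  ext t
  simp only [mem_filter, mem_range, mem_singleton]
  constructor
  · rintro ⟨ht, h0⟩
    rw [boxHeight_of_lt ht] at h0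
    split_ifs at h0 <;> simp_all
  · rintro rfl
    exact ⟨by positivity, by simp [boxHeight]⟩

theorem card_filter_boxHeight_eq_one (h n : ℕ) :
    #{t ∈ range ((n + 1) * (h + 1)) | boxHeight h n t = 1} = h := by
  have : {t ∈ range ((n + 1) * (h + 1)) | boxHeight h n t = 1} =
      ({t ∈ range ((n + 1) * (h + 1)) | n + 1 ∣ t}).erase 0 := by
    ext t
    simp only [mem_filter, mem_range, mem_erase]
    constructor
    · rintro ⟨ht, h1⟩
      rw [boxHeight_of_lt ht] at h1
      split_ifs at h1 with h0 hdvd <;> simp_all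
    · rintro ⟨h0, ht, hdvd⟩
      exact ⟨ht, by simp [boxHeight_of_lt ht, h0, hdvd]⟩
  rw [this, card_erase_of_mem (by simp), Nat.card_filter_dvd_range_mul n.succ_pos,
    Nat.add_sub_cancel]

theorem card_filter_boxHeight_eq_two (h n : ℕ) :
    #{t ∈ range ((n + 1) * (h + 1)) | boxHeight h n t = 2} = n * (h + 1) := by
  have : {t ∈ range ((n + 1) * (h + 1)) | boxHeight h n t = 2} =
      {t ∈ range ((n + 1) * (h + 1)) | ¬ n + 1 ∣ t} := by
    ext t
    simp only [mem_filter, mem_range]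
    constructor
    · rintro ⟨ht, h2⟩
      rw [boxHeight_of_lt ht] at h2
      split_ifs at h2 with h0 hdvd <;> simp_all
    · rintro ⟨ht, hdvd⟩
      have h0 : t ≠ 0 := by rintro rfl; exact hdvd (dvd_zero _)
      exact ⟨ht, by simp [boxHeight_of_lt ht, h0, hdvd]⟩
  have hsplit := card_filter_add_card_filter_not (s := range ((n + 1) * (h + 1))) (n + 1 ∣ ·)
  rw [Nat.card_filter_dvd_range_mul n.succ_pos, card_range] at hsplit
  rw [this]
  linarith

theorem stmt10_general (h n : ℕ) :
    let v : Fin 4 → (Fin 3 → ℝ) := ![![1, 1, (n : ℝ)], ![0, 1, 0], ![0, 0, 1],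
      ![1, -(h : ℝ), -((n : ℝ) * (h : ℝ))]]
    let S : Set (Fin 4 → ℝ) := {r | (∀ i, 0 ≤ r i ∧ r i < 1)
      ∧ (∃ k : ℕ, ∑ i, r i = (k : ℝ))
      ∧ ∀ j, ∃ m : ℤ, (∑ i, r i • v i) j = (m : ℝ)}
    S.ncard = (n + 1) * (h + 1)
      ∧ {r ∈ S | ∑ i, r i = 0}.ncard = 1
      ∧ {r ∈ S | ∑ i, r i = 1}.ncard = h
      ∧ {r ∈ S | ∑ i, r i = 2}.ncard = n * (h + 1) := by
  intro v S
  change (boxPoints h n).ncard = _ ∧ {r ∈ boxPoints h n | ∑ i, r i = 0}.ncard = 1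
    ∧ {r ∈ boxPoints h n | ∑ i, r i = 1}.ncard = h
    ∧ {r ∈ boxPoints h n | ∑ i, r i = 2}.ncard = n * (h + 1)
  refine ⟨?_, ?_, ?_, ?_⟩
  · rw [boxPoints_eq_image, (boxPoint_injOn h n).ncard_image, Set.ncard_coe_finset, card_range]
  · rw [← Nat.cast_zero, ncard_boxPoints_sep_sum_eq, filter_boxHeight_eq_zero, card_singleton]
  · rw [← Nat.cast_one, ncard_boxPoints_sep_sum_eq, card_filter_boxHeight_eq_one]
  · rw [← Nat.cast_ofNat (R := ℝ) (n := 2), ncard_boxPoints_sep_sum_eq,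
      card_filter_boxHeight_eq_two]

/-- For the tetrahedron with vertices `v0=(1,1,n)`, `v1=(0,1,0)`, `v2=(0,0,1)`,
`v3=(1,-h,-n*h)`, the box points `Σ r_i • v_i ∈ ℤ³` with `0 ≤ r_i < 1` and
`Σ r_i ∈ ℕ` comprise exactly `1` element of height `0`, `h` elements of height `1`
and `n*(h+1)` elements of height `2`; in particular there are `(n+1)*(h+1)` in total.
(Elements are recorded by their coefficient vectors `r`, which determine the points
uniquely by affine independence of the vertices; the height is `Σ r_i`.) -/
theorem stmt10 (h n : ℕ) (hh : 0 < h) (hn : 0 < n) :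
    let v : Fin 4 → (Fin 3 → ℝ) := ![![1, 1, (n : ℝ)], ![0, 1, 0], ![0, 0, 1],
      ![1, -(h : ℝ), -((n : ℝ) * (h : ℝ))]]
    let S : Set (Fin 4 → ℝ) := {r | (∀ i, 0 ≤ r i ∧ r i < 1)
      ∧ (∃ k : ℕ, ∑ i, r i = (k : ℝ))
      ∧ ∀ j, ∃ m : ℤ, (∑ i, r i • v i) j = (m : ℝ)}
    S.ncard = (n + 1) * (h + 1)
      ∧ {r ∈ S | ∑ i, r i = 0}.ncard = 1
      ∧ {r ∈ S | ∑ i, r i = 1}.ncard = h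
      ∧ {r ∈ S | ∑ i, r i = 2}.ncard = n * (h + 1) :=
  stmt10_general h n
end
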